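/- Let K ⊂ ℚ[λ1, ψ1, θ1, λ2, θ2] be the ideal generated by α₂,₁ = λ2 − θ2 − ψ1(λ1 − ψ1), α₂,₂ = 24λ1² − 48λ2, α₂,₃ = θ1(λ1 + θ1), β₃,₁ = 20λ1λ2 − 4λ2θ1, β₃,₂ = 2ψ1θ2, β₃,₃ = θ2(θ1 + λ1 − ψ1), β₃,₄ = 2ψ1(λ1 + θ1)(7ψ1 − λ1) − 24ψ1³, and let K' ⊂ ℚ[λ1, ψ1, θ1] be the ideal generated by α₂,₃ = θ1(λ1+θ1), β′₃,₁ = 10λ1³ − 2λ1²θ1, β′₃,₂ = ψ1λ1² − 2ψ1²(λ1−ψ1), β′₃,₃ = (λ1²/2 − ψ1(λ1−ψ1))(θ1+λ1−ψ1), β′₃,₄ = 2ψ1(λ1+θ1)(7ψ1−λ1) − 24ψ1³. Then the ℚ-algebra homomorphism ℚ[λ1,ψ1,θ1,λ2,θ2] → ℚ[λ1,ψ1,θ1]/K' fixing λ1, ψ1, θ1 and sending λ2 ↦ λ1²/2, θ2 ↦ λ1²/2 − ψ1(λ1−ψ1) is surjective with kernel K; in particular ℚ[λ1,ψ1,θ1,λ2,θ2]/K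 ≅ ℚ[λ1,ψ1,θ1]/K'. -/
import Mathlib


open MvPolynomial

/-- The ideal `K ⊂ ℚ[λ1, ψ1, θ1, λ2, θ2]` generated by the seven relations of the
main theorem.  Variables: `λ1 = X 0`, `ψ1 = X 1`, `θ1 = X 2`, `λ2 = X 3`, `θ2 = X 4`. -/
noncomputable def K : Ideal (MvPolynomial (Fin 5) ℚ) :=
  Ideal.span {X 3 - X 4 - X 1 * (X 0 - X 1),
    24 * X 0 ^ 2 - 48 * X 3,
    X 2 * (X 0 + X 2),
    20 * X 0 * X 3 - 4 * X 3 * X 2,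
    2 * X 1 * X 4,
    X 4 * (X 2 + X 0 - X 1),
    2 * X 1 * (X 0 + X 2) * (7 * X 1 - X 0) - 24 * X 1 ^ 3}

/-- The ideal `K' ⊂ ℚ[λ1, ψ1, θ1]` generated by `α₂,₃, β′₃,₁, β′₃,₂, β′₃,₃, β′₃,₄`.
Variables: `λ1 = X 0`, `ψ1 = X 1`, `θ1 = X 2`. -/
noncomputable def K' : Ideal (MvPolynomial (Fin 3) ℚ) :=
  Ideal.span {X 2 * (X 0 + X 2),
    10 * X 0 ^ 3 - 2 * X 0 ^ 2 * X 2,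
    X 1 * X 0 ^ 2 - 2 * X 1 ^ 2 * (X 0 - X 1),
    (C (1/2 : ℚ) * X 0 ^ 2 - X 1 * (X 0 - X 1)) * (X 2 + X 0 - X 1),
    2 * X 1 * (X 0 + X 2) * (7 * X 1 - X 0) - 24 * X 1 ^ 3}

/-- The `ℚ`-algebra homomorphism `ℚ[λ1,ψ1,θ1,λ2,θ2] → ℚ[λ1,ψ1,θ1]/K'` fixing
`λ1, ψ1, θ1` and sending `λ2 ↦ λ1²/2`, `θ2 ↦ λ1²/2 − ψ1(λ1−ψ1)`. -/
noncomputable def Φ : MvPolynomial (Fin 5) ℚ →+* MvPolynomial (Fin 3) ℚ ⧸ K' :=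
  (Ideal.Quotient.mk K').comp
    ((aeval ![X 0, X 1, X 2, C (1/2 : ℚ) * X 0 ^ 2,
        C (1/2 : ℚ) * X 0 ^ 2 - X 1 * (X 0 - X 1)] :
      MvPolynomial (Fin 5) ℚ →ₐ[ℚ] MvPolynomial (Fin 3) ℚ) :
        MvPolynomial (Fin 5) ℚ →+* MvPolynomial (Fin 3) ℚ)

/- ### Auxiliary lemmas -/

lemma C_half_mul_two {σ : Type*} : (C (1/2 : ℚ) : MvPolynomial σ ℚ) * 2 = 1 := by
  rw [show (2 : MvPolynomial σ ℚ) = C 2 from (map_ofNat C 2).symm, ← C_mul]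
  norm_num

lemma mem_of_C_mul_mem {σ : Type*} {I : Ideal (MvPolynomial σ ℚ)} {q : ℚ} (hq : q ≠ 0)
    {p : MvPolynomial σ ℚ} (h : C q * p ∈ I) : p ∈ I := by
  have := I.mul_mem_left (C q⁻¹) h
  rwa [← mul_assoc, ← C_mul, inv_mul_cancel₀ hq, C_1, one_mul] at this

/-- Generator 1 of `K`. -/
lemma hg1 : (X 3 - X 4 - X 1 * (X 0 - X 1) : MvPolynomial (Fin 5) ℚ) ∈ K :=
  Ideal.subset_span (Set.mem_insert _ _)

lemma hg2 : (24 * X 0 ^ 2 - 48 * X 3 : MvPolynomial (Fin 5) ℚ) ∈ K :=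
  Ideal.subset_span (Set.mem_insert_of_mem _ (Set.mem_insert _ _))

lemma hg3 : (X 2 * (X 0 + X 2) : MvPolynomial (Fin 5) ℚ) ∈ K :=
  Ideal.subset_span (Set.mem_insert_of_mem _ (Set.mem_insert_of_mem _ (Set.mem_insert _ _)))

lemma hg4 : (20 * X 0 * X 3 - 4 * X 3 * X 2 : MvPolynomial (Fin 5) ℚ) ∈ K :=
  Ideal.subset_span (Set.mem_insert_of_mem _ (Set.mem_insert_of_mem _
    (Set.mem_insert_of_mem _ (Set.mem_insert _ _))))

lemma hg5 : (2 * X 1 * X 4 : MvPolynomial (Fin 5) ℚ) ∈ K :=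
  Ideal.subset_span (Set.mem_insert_of_mem _ (Set.mem_insert_of_mem _
    (Set.mem_insert_of_mem _ (Set.mem_insert_of_mem _ (Set.mem_insert _ _)))))

lemma hg6 : (X 4 * (X 2 + X 0 - X 1) : MvPolynomial (Fin 5) ℚ) ∈ K :=
  Ideal.subset_span (Set.mem_insert_of_mem _ (Set.mem_insert_of_mem _
    (Set.mem_insert_of_mem _ (Set.mem_insert_of_mem _ (Set.mem_insert_of_mem _
      (Set.mem_insert _ _))))))

lemma hg7 : (2 * X 1 * (X 0 + X 2) * (7 * X 1 - X 0) - 24 * X 1 ^ 3 :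
    MvPolynomial (Fin 5) ℚ) ∈ K :=
  Ideal.subset_span (Set.mem_insert_of_mem _ (Set.mem_insert_of_mem _
    (Set.mem_insert_of_mem _ (Set.mem_insert_of_mem _ (Set.mem_insert_of_mem _
      (Set.mem_insert_of_mem _ rfl))))))

/- Generators of `K'` as elements of `K`. -/
lemma hk1 : (X 2 * (X 0 + X 2) : MvPolynomial (Fin 5) ℚ) ∈ K := hg3

lemma hk2 : (10 * X 0 ^ 3 - 2 * X 0 ^ 2 * X 2 : MvPolynomial (Fin 5) ℚ) ∈ K := by
  apply mem_of_C_mul_mem (q := 12) (by norm_num)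
  rw [map_ofNat, show (12 : MvPolynomial (Fin 5) ℚ) * (10 * X 0 ^ 3 - 2 * X 0 ^ 2 * X 2)
    = (5 * X 0 - X 2) * (24 * X 0 ^ 2 - 48 * X 3) + 12 * (20 * X 0 * X 3 - 4 * X 3 * X 2)
      from by ring]
  exact Ideal.add_mem _ (Ideal.mul_mem_left _ _ hg2) (Ideal.mul_mem_left _ _ hg4)

lemma hk3 : (X 1 * X 0 ^ 2 - 2 * X 1 ^ 2 * (X 0 - X 1) : MvPolynomial (Fin 5) ℚ) ∈ K := by
  apply mem_of_C_mul_mem (q := 24) (by norm_num)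
  rw [map_ofNat, show (24 : MvPolynomial (Fin 5) ℚ) * (X 1 * X 0 ^ 2 - 2 * X 1 ^ 2 * (X 0 - X 1))
    = 24 * (2 * X 1 * X 4) + X 1 * (24 * X 0 ^ 2 - 48 * X 3)
      + 48 * X 1 * (X 3 - X 4 - X 1 * (X 0 - X 1)) from by ring]
  exact Ideal.add_mem _ (Ideal.add_mem _ (Ideal.mul_mem_left _ _ hg5)
    (Ideal.mul_mem_left _ _ hg2)) (Ideal.mul_mem_left _ _ hg1)

lemma hk4 : ((C (1/2 : ℚ) * X 0 ^ 2 - X 1 * (X 0 - X 1)) * (X 2 + X 0 - X 1) :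
    MvPolynomial (Fin 5) ℚ) ∈ K := by
  apply mem_of_C_mul_mem (q := 48) (by norm_num)
  rw [map_ofNat, show (48 : MvPolynomial (Fin 5) ℚ)
      * ((C (1/2 : ℚ) * X 0 ^ 2 - X 1 * (X 0 - X 1)) * (X 2 + X 0 - X 1))
    = 48 * (X 4 * (X 2 + X 0 - X 1)) + (X 2 + X 0 - X 1) * (24 * X 0 ^ 2 - 48 * X 3)
      + 48 * (X 2 + X 0 - X 1) * (X 3 - X 4 - X 1 * (X 0 - X 1))
      from by linear_combination (24 * X 0 ^ 2 * (X 2 + X 0 - X 1)) *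
        (C_half_mul_two (σ := Fin 5))]
  exact Ideal.add_mem _ (Ideal.add_mem _ (Ideal.mul_mem_left _ _ hg6)
    (Ideal.mul_mem_left _ _ hg2)) (Ideal.mul_mem_left _ _ hg1)

lemma hk5 : (2 * X 1 * (X 0 + X 2) * (7 * X 1 - X 0) - 24 * X 1 ^ 3 :
    MvPolynomial (Fin 5) ℚ) ∈ K := hg7

/-- `λ2 − λ1²/2 ∈ K`. -/
lemma hx3 : (X 3 - C (1/2 : ℚ) * X 0 ^ 2 : MvPolynomial (Fin 5) ℚ) ∈ K := by
  apply mem_of_C_mul_mem (q := 48) (by norm_num)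
  rw [map_ofNat, show (48 : MvPolynomial (Fin 5) ℚ) * (X 3 - C (1/2 : ℚ) * X 0 ^ 2)
    = -(24 * X 0 ^ 2 - 48 * X 3)
      from by linear_combination (-(24 * X 0 ^ 2)) * (C_half_mul_two (σ := Fin 5))]
  exact neg_mem hg2

/-- `θ2 − (λ1²/2 − ψ1(λ1−ψ1)) ∈ K`. -/
lemma hx4 : (X 4 - (C (1/2 : ℚ) * X 0 ^ 2 - X 1 * (X 0 - X 1)) :
    MvPolynomial (Fin 5) ℚ) ∈ K := by
  apply mem_of_C_mul_mem (q := 48) (by norm_num)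
  rw [map_ofNat, show (48 : MvPolynomial (Fin 5) ℚ)
      * (X 4 - (C (1/2 : ℚ) * X 0 ^ 2 - X 1 * (X 0 - X 1)))
    = -(48 * (X 3 - X 4 - X 1 * (X 0 - X 1))) - (24 * X 0 ^ 2 - 48 * X 3)
      from by linear_combination (-(24 * X 0 ^ 2)) * (C_half_mul_two (σ := Fin 5))]
  exact Ideal.sub_mem _ (neg_mem (Ideal.mul_mem_left _ _ hg1)) hg2

/-- The retraction map `ℚ[λ1,ψ1,θ1] → ℚ[λ1,ψ1,θ1,λ2,θ2]/K`. -/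
noncomputable def r : MvPolynomial (Fin 3) ℚ →+* MvPolynomial (Fin 5) ℚ ⧸ K :=
  (Ideal.Quotient.mk K).comp
    ((rename ![(0 : Fin 5), 1, 2] : MvPolynomial (Fin 3) ℚ →ₐ[ℚ]
      MvPolynomial (Fin 5) ℚ) : MvPolynomial (Fin 3) ℚ →+* MvPolynomial (Fin 5) ℚ)

lemma hK'_le_ker_r : ∀ a ∈ K', r a = 0 := by
  have h : K' ≤ RingHom.ker r := by
    rw [K', Ideal.span_le]
    intro g hg
    simp only [Set.mem_insert_iff, Set.mem_singleton_iff] at hg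
    rw [SetLike.mem_coe, RingHom.mem_ker]
    have hr : ∀ p : MvPolynomial (Fin 3) ℚ,
        r p = Ideal.Quotient.mk K (rename ![(0 : Fin 5), 1, 2] p) := fun p => rfl
    rcases hg with rfl | rfl | rfl | rfl | rfl <;>
      rw [hr, Ideal.Quotient.eq_zero_iff_mem] <;>
      simp only [map_mul, map_sub, map_add, map_pow, map_ofNat, rename_C, rename_X,
        Matrix.cons_val_zero, Matrix.cons_val_one, Matrix.head_cons,
        Matrix.cons_val_two, Matrix.tail_cons]
    · exact hk1
    · exact hk2
    · exact hk3
    · exact hk4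
    · exact hk5
  exact fun a ha => h ha

/-- The induced map on the quotient. -/
noncomputable def rbar : MvPolynomial (Fin 3) ℚ ⧸ K' →+* MvPolynomial (Fin 5) ℚ ⧸ K :=
  Ideal.Quotient.lift K' r hK'_le_ker_r

lemma rbar_comp_Phi : rbar.comp Φ = Ideal.Quotient.mk K := by
  have hΦ : ∀ p : MvPolynomial (Fin 5) ℚ,
      Φ p = Ideal.Quotient.mk K' (aeval ![X 0, X 1, X 2, C (1/2 : ℚ) * X 0 ^ 2,
        C (1/2 : ℚ) * X 0 ^ 2 - X 1 * (X 0 - X 1)] p) := fun p => rfl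
  have hr : ∀ p : MvPolynomial (Fin 3) ℚ,
      r p = Ideal.Quotient.mk K (rename ![(0 : Fin 5), 1, 2] p) := fun p => rfl
  apply MvPolynomial.ringHom_ext
  · intro q
    rw [RingHom.comp_apply, hΦ, aeval_C, MvPolynomial.algebraMap_eq, rbar,
      Ideal.Quotient.lift_mk, hr, rename_C]
  · intro i
    rw [RingHom.comp_apply, hΦ, aeval_X, rbar, Ideal.Quotient.lift_mk, hr]
    fin_cases i <;>
      simp only [Fin.zero_eta, Fin.mk_one, Fin.reduceFinMk, Fin.isValue, Matrix.cons_val_zero, Matrix.cons_val_one, Matrix.head_cons,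
        Matrix.cons_val_two, Matrix.tail_cons, Matrix.cons_val_three, Matrix.cons_val_four,
        map_mul, map_sub, map_pow, rename_C, rename_X, Fin.isValue]
    · simp only [← map_pow, ← map_mul, ← map_sub]
      rw [Ideal.Quotient.mk_eq_mk_iff_sub_mem]
      simpa [neg_sub] using neg_mem hx3
    · simp only [← map_pow, ← map_mul, ← map_sub]
      rw [Ideal.Quotient.mk_eq_mk_iff_sub_mem]
      simpa [neg_sub] using neg_mem hx4

/- Generators of `K'`. -/
lemma hq1 : (X 2 * (X 0 + X 2) : MvPolynomial (Fin 3) ℚ) ∈ K' :=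
  Ideal.subset_span (Set.mem_insert _ _)

lemma hq2 : (10 * X 0 ^ 3 - 2 * X 0 ^ 2 * X 2 : MvPolynomial (Fin 3) ℚ) ∈ K' :=
  Ideal.subset_span (Set.mem_insert_of_mem _ (Set.mem_insert _ _))

lemma hq3 : (X 1 * X 0 ^ 2 - 2 * X 1 ^ 2 * (X 0 - X 1) : MvPolynomial (Fin 3) ℚ) ∈ K' :=
  Ideal.subset_span (Set.mem_insert_of_mem _ (Set.mem_insert_of_mem _ (Set.mem_insert _ _)))

lemma hq4 : ((C (1/2 : ℚ) * X 0 ^ 2 - X 1 * (X 0 - X 1)) * (X 2 + X 0 - X 1) :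
    MvPolynomial (Fin 3) ℚ) ∈ K' :=
  Ideal.subset_span (Set.mem_insert_of_mem _ (Set.mem_insert_of_mem _
    (Set.mem_insert_of_mem _ (Set.mem_insert _ _))))

lemma hq5 : (2 * X 1 * (X 0 + X 2) * (7 * X 1 - X 0) - 24 * X 1 ^ 3 :
    MvPolynomial (Fin 3) ℚ) ∈ K' :=
  Ideal.subset_span (Set.mem_insert_of_mem _ (Set.mem_insert_of_mem _
    (Set.mem_insert_of_mem _ (Set.mem_insert_of_mem _ rfl))))

/-- The homomorphism `Φ` is surjective with kernel `K`; in particular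
`ℚ[λ1,ψ1,θ1,λ2,θ2]/K ≅ ℚ[λ1,ψ1,θ1]/K'`. -/
theorem rational_chow_ring_presentation :
    Function.Surjective Φ ∧ RingHom.ker Φ = K := by
  have hΦ : ∀ p : MvPolynomial (Fin 5) ℚ,
      Φ p = Ideal.Quotient.mk K' (aeval ![X 0, X 1, X 2, C (1/2 : ℚ) * X 0 ^ 2,
        C (1/2 : ℚ) * X 0 ^ 2 - X 1 * (X 0 - X 1)] p) := fun p => rfl
  constructor
  · intro y
    obtain ⟨p, rfl⟩ := Ideal.Quotient.mk_surjective y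
    refine ⟨rename ![(0 : Fin 5), 1, 2] p, ?_⟩
    rw [hΦ, aeval_rename]
    congr 1
    rw [show (![X 0, X 1, X 2, C (1/2 : ℚ) * X 0 ^ 2,
        C (1/2 : ℚ) * X 0 ^ 2 - X 1 * (X 0 - X 1)] ∘ ![(0 : Fin 5), 1, 2])
        = (X : Fin 3 → MvPolynomial (Fin 3) ℚ) from by
      funext i; fin_cases i <;> rfl]
    exact aeval_X_left_apply p
  · apply le_antisymm
    · intro p hp
      rw [RingHom.mem_ker] at hp
      have h := DFunLike.congr_fun rbar_comp_Phi p
      rw [RingHom.comp_apply, hp, map_zero] at h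
      rw [← Ideal.Quotient.eq_zero_iff_mem, ← h]
    · have h2 := C_half_mul_two (σ := Fin 3)
      rw [show K = Ideal.span {X 3 - X 4 - X 1 * (X 0 - X 1),
          24 * X 0 ^ 2 - 48 * X 3,
          X 2 * (X 0 + X 2),
          20 * X 0 * X 3 - 4 * X 3 * X 2,
          2 * X 1 * X 4,
          X 4 * (X 2 + X 0 - X 1),
          2 * X 1 * (X 0 + X 2) * (7 * X 1 - X 0) - 24 * X 1 ^ 3} from rfl, Ideal.span_le]
      intro g hg
      simp only [Set.mem_insert_iff, Set.mem_singleton_iff] at hg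
      rw [SetLike.mem_coe, RingHom.mem_ker]
      have simpl : True := trivial
      rcases hg with rfl | rfl | rfl | rfl | rfl | rfl | rfl <;>
        rw [hΦ, Ideal.Quotient.eq_zero_iff_mem] <;>
        simp only [map_mul, map_sub, map_add, map_pow, map_ofNat, aeval_C, aeval_X,
          Matrix.cons_val_zero, Matrix.cons_val_one, Matrix.head_cons,
          Matrix.cons_val_two, Matrix.tail_cons, Matrix.cons_val_three, Matrix.cons_val_four]
      · rw [show (C (1/2 : ℚ) * X 0 ^ 2 - (C (1/2 : ℚ) * X 0 ^ 2 - X 1 * (X 0 - X 1))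
            - X 1 * (X 0 - X 1) : MvPolynomial (Fin 3) ℚ) = 0 from by ring]
        exact Ideal.zero_mem _
      · rw [show (24 * X 0 ^ 2 - 48 * (C (1/2 : ℚ) * X 0 ^ 2) : MvPolynomial (Fin 3) ℚ) = 0
          from by linear_combination (-(24 * X 0 ^ 2 : MvPolynomial (Fin 3) ℚ)) * h2]
        exact Ideal.zero_mem _
      · exact hq1
      · rw [show (20 * X 0 * (C (1/2 : ℚ) * X 0 ^ 2) - 4 * (C (1/2 : ℚ) * X 0 ^ 2) * X 2 :
            MvPolynomial (Fin 3) ℚ) = 10 * X 0 ^ 3 - 2 * X 0 ^ 2 * X 2 from by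
          linear_combination (10 * X 0 ^ 3 - 2 * X 0 ^ 2 * X 2 : MvPolynomial (Fin 3) ℚ) * h2]
        exact hq2
      · rw [show (2 * X 1 * (C (1/2 : ℚ) * X 0 ^ 2 - X 1 * (X 0 - X 1)) :
            MvPolynomial (Fin 3) ℚ) = X 1 * X 0 ^ 2 - 2 * X 1 ^ 2 * (X 0 - X 1) from by
          linear_combination (X 1 * X 0 ^ 2 : MvPolynomial (Fin 3) ℚ) * h2]
        exact hq3
      · exact hq4
      · exact hq5
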